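/- Sparsity obstruction for the incremental PCA algorithm: let D be the distribution on ℝ² taking value (√3, 0) with probability 1/3 and (0, √2) with probability 2/3. The covariance E[xxᵀ] = diag(1, 4/3), so the maximal eigenvector (for k = 1) is (0,1). Yet if the incremental algorithm (rank-1 projection of the running sum of outer products) is initialized with the first sample, then whenever the first sample is (√3,0), all subsequent rank-1 projections keep the direction (1,0): specifically, the rank-1 projection of t·c·e₁e₁ᵀ + 2·e₂e₂ᵀ equals (t·c)·e₁e₁ᵀ whenever t·c > 2 where c = 3, and a sample (0,√2) never displaces the current eigenvector once the accumulated weight on e₁ exceeds 2. -/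

import Mathlib

open Matrix

/-- Squared Frobenius norm. -/
noncomputable def frobSq (A : Matrix (Fin 2) (Fin 2) ℝ) : ℝ := (Aᵀ * A).trace

/-!
A rank-one PSD matrix `B = [[p, q], [q, r]]` has `q² = p r` and `r ≥ 0`, so for `b ≤ a`
`‖B - diag(a, b)‖² - b² = (p - a)² + r² + 2 r (p - b)`. This is nonnegative when `p ≥ b`,
and when `p < b ≤ a` it is at least `(b - p)² + r² - 2 r (b - p) = (b - p - r)²`. Hence
`diag(a, 0)`, at distance `b`, is a nearest rank-one PSD matrix to `diag(a, b)`: with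
`a = 3t > 2 = b` the sample `(0, √2)` never moves the incremental estimate off `e₁`.
-/

lemma frobSq_eq_sum_sq (A : Matrix (Fin 2) (Fin 2) ℝ) :
    frobSq A = A 0 0 ^ 2 + A 0 1 ^ 2 + A 1 0 ^ 2 + A 1 1 ^ 2 := by
  simp only [frobSq, trace_fin_two, mul_apply, Fin.sum_univ_two, transpose_apply]
  ring

theorem Matrix.det_eq_zero_of_rank_lt {n K : Type*} [Fintype n] [DecidableEq n] [Field K]
    {A : Matrix n n K} (h : A.rank < Fintype.card n) : A.det = 0 := by
  by_contra hA
  exact h.ne (A.rank_of_isUnit ((isUnit_iff_isUnit_det A).2 (isUnit_iff_ne_zero.2 hA)))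

lemma rank_fin_two_diag_le_one (a : ℝ) : (!![a, 0; 0, 0] : Matrix (Fin 2) (Fin 2) ℝ).rank ≤ 1 := by
  convert rank_vecMulVec_le ![a, 0] ![(1 : ℝ), 0]
  ext i j; fin_cases i <;> fin_cases j <;> simp

lemma posSemidef_fin_two_diag {a : ℝ} (ha : 0 ≤ a) :
    (!![a, 0; 0, 0] : Matrix (Fin 2) (Fin 2) ℝ).PosSemidef := by
  have : (!![a, 0; 0, 0] : Matrix (Fin 2) (Fin 2) ℝ) = diagonal ![a, 0] := by
    ext i j; fin_cases i <;> fin_cases j <;> rfl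
  rw [this, posSemidef_diagonal_iff]
  intro i; fin_cases i <;> simp [ha]

lemma frobSq_sub_self_fin_two_diag (a b : ℝ) :
    frobSq (!![a, 0; 0, 0] - !![a, 0; 0, b]) = b ^ 2 := by
  simp [frobSq_eq_sum_sq]

theorem sq_le_frobSq_sub_fin_two_diag {a b : ℝ} (hba : b ≤ a) {B : Matrix (Fin 2) (Fin 2) ℝ}
    (hB : B.PosSemidef) (hrank : B.rank ≤ 1) : b ^ 2 ≤ frobSq (B - !![a, 0; 0, b]) := by
  have hsymm : B 1 0 = B 0 1 := by simpa using congrFun₂ hB.isHermitian 0 1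
  have hdet : B 0 0 * B 1 1 = B 0 1 ^ 2 := by
    have := det_eq_zero_of_rank_lt (hrank.trans_lt (by simp))
    rw [det_fin_two, hsymm] at this
    linarith
  have hr : 0 ≤ B 1 1 := hB.diag_nonneg
  rw [frobSq_eq_sum_sq]
  simp only [Matrix.sub_apply, of_apply, cons_val', cons_val_zero, cons_val_one, empty_val',
    cons_val_fin_one, hsymm, sub_zero]
  set p := B 0 0
  set r := B 1 1
  rcases le_or_gt b p with hbp | hpb
  · nlinarith
  · nlinarith [sq_nonneg (b - p - r)]

/-- Failure case for the incremental PCA algorithm: for the distribution taking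
`(√3,0)` w.p. `1/3` and `(0,√2)` w.p. `2/3`, the covariance is `diag(1, 4/3)` whose
maximal eigenvector is `(0,1)`; yet whenever the accumulated weight `t·c` on `e₁`
(with `c = 3`) exceeds `2`, the rank-1 Frobenius projection of
`t·c·e₁e₁ᵀ + 2·e₂e₂ᵀ` is `t·c·e₁e₁ᵀ`, so a sample `(0,√2)` never displaces `e₁`. -/
theorem stmt17 :
    ((1 / 3 : ℝ) • vecMulVec ![Real.sqrt 3, 0] ![Real.sqrt 3, 0] +
        (2 / 3 : ℝ) • vecMulVec ![0, Real.sqrt 2] ![0, Real.sqrt 2] =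
      (!![1, 0; 0, 4 / 3] : Matrix (Fin 2) (Fin 2) ℝ)) ∧
    ((!![1, 0; 0, 4 / 3] : Matrix (Fin 2) (Fin 2) ℝ) *ᵥ ![0, 1] =
      (4 / 3 : ℝ) • ![0, 1]) ∧
    ((1 : ℝ) < 4 / 3) ∧
    (∀ t c : ℝ, c = 3 → 2 < t * c →
      (!![t * c, 0; 0, 0] : Matrix (Fin 2) (Fin 2) ℝ).PosSemidef ∧
      (!![t * c, 0; 0, 0] : Matrix (Fin 2) (Fin 2) ℝ).rank ≤ 1 ∧
      ∀ B : Matrix (Fin 2) (Fin 2) ℝ, B.PosSemidef → B.rank ≤ 1 →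
        frobSq (!![t * c, 0; 0, 0] - !![t * c, 0; 0, 2]) ≤
          frobSq (B - !![t * c, 0; 0, 2])) := by
  have hsqrt3 : Real.sqrt 3 * Real.sqrt 3 = 3 := Real.mul_self_sqrt (by norm_num)
  have hsqrt2 : Real.sqrt 2 * Real.sqrt 2 = 2 := Real.mul_self_sqrt (by norm_num)
  refine ⟨?_, ?_, by norm_num, ?_⟩
  · ext i j
    fin_cases i <;> fin_cases j <;> norm_num [hsqrt3, hsqrt2]
  · ext i
    fin_cases i <;> simp [mulVec, dotProduct, Fin.sum_univ_two]
  · intro t c _ hgap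
    refine ⟨posSemidef_fin_two_diag (by linarith), rank_fin_two_diag_le_one _,
      fun B hB hrank => ?_⟩
    rw [frobSq_sub_self_fin_two_diag]
    exact sq_le_frobSq_sub_fin_two_diag hgap.le hB hrank
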